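/- For the monomials g_l(t) = t^l, for every integer p ≥ 1 and all z, s ∈ ℂ, the identity Σ_{l=1}^{p} binom(p, l) z^{p−l} 𝔄(g_l; s) = 𝔇(g_p; s + z, z) holds, where 𝔄(g; s) = (2π)^{−2} ∫₀¹ [g(st) − (1−t)g(0) − t g(s)]/(t(1−t)) dt and 𝔇(g; s, s₁) = (2π)^{−2} ∫₀¹ [g(st + s₁(1−t)) − t g(s) − (1−t) g(s₁)]/(t(1−t)) dt. -/

import Mathlib

noncomputable section

/-- The coefficient `𝔄(g; s) = (2π)⁻² ∫₀¹ [g(st) - (1-t)g(0) - t g(s)] / (t(1-t)) dt`. -/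
noncomputable def couA (g : ℂ → ℂ) (s : ℂ) : ℂ :=
  (((2 * Real.pi) ^ 2 : ℝ) : ℂ)⁻¹ *
    ∫ t in (0 : ℝ)..1, (g ((t : ℂ) * s) - (1 - (t : ℂ)) * g 0 - (t : ℂ) * g s) /
      ((t : ℂ) * (1 - (t : ℂ)))

/-- The coefficient
`𝔇(g; s, s₁) = (2π)⁻² ∫₀¹ [g(st + s₁(1-t)) - t g(s) - (1-t) g(s₁)] / (t(1-t)) dt`. -/
noncomputable def couD (g : ℂ → ℂ) (s s₁ : ℂ) : ℂ :=
  (((2 * Real.pi) ^ 2 : ℝ) : ℂ)⁻¹ *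
    ∫ t in (0 : ℝ)..1,
      (g ((t : ℂ) * s + (1 - (t : ℂ)) * s₁) - (t : ℂ) * g s - (1 - (t : ℂ)) * g s₁) /
        ((t : ℂ) * (1 - (t : ℂ)))

/-!
By the binomial theorem, `∑ₗ (p choose l) z^(p-l) ((ts)^l - t s^l)` equals
`(ts + z)^p - z^p - t((s + z)^p - z^p)`, so the weighted `𝔄`-integrands add up pointwise to the
`𝔇`-integrand (at `t ∈ {0, 1}` both sides are `x / 0 = 0`). Sum and integral may be exchanged
because each `𝔄`-integrand agrees with a polynomial in `t` off `{0, 1}`: its numerator vanishes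
at both ends.
-/

open MeasureTheory Set

theorem sum_Icc_choose_mul_pow {R : Type*} [CommRing R] (p : ℕ) (x z : R) :
    ∑ l ∈ Finset.Icc 1 p, (p.choose l : R) * z ^ (p - l) * x ^ l = (x + z) ^ p - z ^ p := by
  rw [add_pow, Finset.range_eq_Ico, Finset.sum_eq_sum_Ico_succ_bot (by omega : 0 < p + 1),
    zero_add, Finset.Ico_add_one_right_eq_Icc]
  simp only [pow_zero, Nat.sub_zero, Nat.choose_zero_right, Nat.cast_one, one_mul, mul_one,
    add_sub_cancel_left]
  exact Finset.sum_congr rfl fun l _ => by ring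

theorem intervalIntegrable_div_mul_one_sub {N q : ℝ → ℂ} (hq : Continuous q)
    (hN : ∀ t ∈ Ioo (0 : ℝ) 1, N t = t * (1 - t) * q t) :
    IntervalIntegrable (fun t : ℝ => N t / ((t : ℂ) * (1 - (t : ℂ)))) volume 0 1 := by
  refine (hq.intervalIntegrable 0 1).congr_uIoo fun t ht => ?_
  rw [uIoo_of_le zero_le_one] at ht
  have hne : ((t * (1 - t) : ℝ) : ℂ) ≠ 0 := by
    exact_mod_cast (mul_pos ht.1 (sub_pos.2 ht.2)).ne'
  push_cast at hne
  rw [hN t ht, mul_div_cancel_left₀ _ hne]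

theorem intervalIntegrable_couA_integrand_pow (s : ℂ) {l : ℕ} (hl : l ≠ 0) :
    IntervalIntegrable (fun t : ℝ =>
      (((t : ℂ) * s) ^ l - (1 - (t : ℂ)) * 0 ^ l - (t : ℂ) * s ^ l) /
        ((t : ℂ) * (1 - (t : ℂ)))) volume 0 1 := by
  obtain ⟨m, rfl⟩ : ∃ m, l = m + 1 := ⟨l - 1, by omega⟩
  refine intervalIntegrable_div_mul_one_sub
    (q := fun t => -s ^ (m + 1) * ∑ k ∈ Finset.range m, (t : ℂ) ^ k) (by fun_prop)
    fun t _ => ?_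
  rw [zero_pow hl]
  linear_combination -(s ^ (m + 1) * t) * geom_sum_mul (t : ℂ) m

theorem sum_choose_mul_couA_integrand_pow (p : ℕ) (z s t : ℂ) :
    ∑ l ∈ Finset.Icc 1 p, (p.choose l : ℂ) * z ^ (p - l) *
        (((t * s) ^ l - (1 - t) * 0 ^ l - t * s ^ l) / (t * (1 - t))) =
      ((t * (s + z) + (1 - t) * z) ^ p - t * (s + z) ^ p - (1 - t) * z ^ p) /
        (t * (1 - t)) := by
  simp_rw [← mul_div_assoc, ← Finset.sum_div]
  congr 1
  have hterm : ∀ l ∈ Finset.Icc 1 p,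
      (p.choose l : ℂ) * z ^ (p - l) * ((t * s) ^ l - (1 - t) * 0 ^ l - t * s ^ l) =
        (p.choose l : ℂ) * z ^ (p - l) * (t * s) ^ l -
          t * ((p.choose l : ℂ) * z ^ (p - l) * s ^ l) := by
    intro l hl
    rw [zero_pow (Nat.one_le_iff_ne_zero.1 (Finset.mem_Icc.1 hl).1)]
    ring
  rw [Finset.sum_congr rfl hterm, Finset.sum_sub_distrib, ← Finset.mul_sum,
    sum_Icc_choose_mul_pow, sum_Icc_choose_mul_pow]
  ring

theorem statement16_general (p : ℕ) (z s : ℂ) :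
    ∑ l ∈ Finset.Icc 1 p, (p.choose l : ℂ) * z ^ (p - l) * couA (fun w => w ^ l) s =
      couD (fun w => w ^ p) (s + z) z := by
  unfold couA couD
  simp_rw [mul_left_comm _ (((2 * Real.pi) ^ 2 : ℝ) : ℂ)⁻¹, ← Finset.mul_sum]
  congr 1
  simp_rw [← intervalIntegral.integral_const_mul]
  rw [← intervalIntegral.integral_finsetSum fun l hl =>
    (intervalIntegrable_couA_integrand_pow s
      (Nat.one_le_iff_ne_zero.1 (Finset.mem_Icc.1 hl).1)).const_mul _]
  simp_rw [sum_choose_mul_couA_integrand_pow]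

/-- For the monomials `g_l(t) = t^l`, every integer `p ≥ 1` and all
`z, s ∈ ℂ`:  `Σ_{l=1}^{p} (p choose l) z^{p-l} 𝔄(g_l; s) = 𝔇(g_p; s + z, z)`. -/
theorem statement16 (p : ℕ) (hp : 1 ≤ p) (z s : ℂ) :
    ∑ l ∈ Finset.Icc 1 p, (p.choose l : ℂ) * z ^ (p - l) * couA (fun w => w ^ l) s =
      couD (fun w => w ^ p) (s + z) z :=
  statement16_general p z s

end
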